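/- arXiv:2102.08676 — 4 statements merged into one kernel-verified Lean document; each statement's English description precedes it below -/
import Mathlib

section
/- For every integer m ≥ 0, Σ_{k=0}^{m+1} B_{2k} · B^{(2m+2)}_{2m+2-2k}(m+1) / ((2k)! (2m+2-2k)!) = 0, where B_{2k} are the Bernoulli numbers. -/
set_option linter.unusedTactic false


/-- Generalized Bernoulli polynomial `B_n^{(m)}(t)`, defined by the exponential
generating function `x^m e^{tx}/(e^x-1)^m = Σ_{n≥0} B_n^{(m)}(t) x^n/n!`. -/
noncomputable def genBernoulli (m : ℕ) (t : ℚ) (n : ℕ) : ℚ :=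
  (n.factorial : ℚ) * PowerSeries.coeff n
    (((PowerSeries.mk fun k => bernoulli k / (k.factorial : ℚ)) ^ m) *
      PowerSeries.mk fun k => t ^ k / (k.factorial : ℚ))

namespace BGAux

open PowerSeries Finset

noncomputable section

def PB : PowerSeries ℚ := PowerSeries.mk fun k => bernoulli k / (k.factorial : ℚ)

def EE (t : ℚ) : PowerSeries ℚ := PowerSeries.mk fun k => t ^ k / (k.factorial : ℚ)

lemma EE_eq (t : ℚ) : EE t = rescale t (exp ℚ) := by
  ext n
  simp [EE, coeff_rescale, coeff_exp, div_eq_mul_inv]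

lemma PB_eq : PB = bernoulliPowerSeries ℚ := by
  ext n
  simp [PB, bernoulliPowerSeries, coeff_mk]

lemma hPQ : PB * (exp ℚ - 1) = X := by
  rw [PB_eq]; exact bernoulliPowerSeries_mul_exp_sub_one ℚ

lemma hEmul (a b : ℚ) : EE a * EE b = EE (a + b) := by
  rw [EE_eq, EE_eq, EE_eq]; exact exp_mul_exp_eq_exp_add a b

lemma hEzero : EE 0 = 1 := by
  rw [EE_eq, rescale_zero]
  simp

lemma hexpE : exp ℚ = EE 1 := by
  rw [EE_eq, rescale_one]; rfl

lemma hdEE (t : ℚ) : d⁄dX ℚ (EE t) = C t * EE t := by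
  ext n
  rw [coeff_derivative, coeff_C_mul]
  simp only [EE, coeff_mk]
  have h1 : ((n+1).factorial : ℚ) ≠ 0 := Nat.cast_ne_zero.mpr (Nat.factorial_ne_zero _)
  have h2 : ((n).factorial : ℚ) ≠ 0 := Nat.cast_ne_zero.mpr (Nat.factorial_ne_zero _)
  rw [Nat.factorial_succ] at h1 ⊢
  push_cast at h1 ⊢
  field_simp
  ring

lemma hdexp : d⁄dX ℚ (exp ℚ) = exp ℚ := by
  rw [hexpE, hdEE]; simp

lemma hXdP : X * d⁄dX ℚ PB = PB - PB ^ 2 - X * PB := by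
  have h1 : (d⁄dX ℚ) (PB * (exp ℚ - 1)) = 1 := by rw [hPQ, derivative_X]
  rw [Derivation.leibniz] at h1
  rw [map_sub, hdexp, Derivation.map_one_eq_zero, sub_zero, smul_eq_mul, smul_eq_mul] at h1
  linear_combination PB * h1 - (d⁄dX ℚ PB + PB) * hPQ

lemma main_id (M : ℕ) (t : ℚ) :
    X * d⁄dX ℚ (PB ^ (M+1) * EE t)
      = C t * (X * (PB ^ (M+1) * EE t))
        + C ((M : ℚ) + 1) *
            (PB ^ (M+1) * EE t - PB ^ (M+2) * EE t - X * (PB ^ (M+1) * EE t)) := by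
  have hc : ((M + 1 : ℕ) : ℚ⟦X⟧) = C ((M : ℚ) + 1) := by
    rw [← map_natCast (C (R := ℚ)) (M + 1)]
    norm_num
  have hd : d⁄dX ℚ (PB ^ (M+1) * EE t)
      = PB ^ (M+1) * (C t * EE t)
        + EE t * (C ((M : ℚ) + 1) * (PB ^ M * d⁄dX ℚ PB)) := by
    rw [Derivation.leibniz, hdEE, Derivation.leibniz_pow]
    simp only [Nat.add_sub_cancel, smul_eq_mul, nsmul_eq_mul, hc]
  rw [hd]
  linear_combination (C ((M : ℚ) + 1) * PB ^ M * EE t) * hXdP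

lemma brec (t : ℚ) (M : ℕ) :
    ((M : ℚ) + 1) * coeff (M+1) (PB ^ (M+2) * EE t)
      = (t - ((M : ℚ) + 1)) * coeff M (PB ^ (M+1) * EE t) := by
  have h := congrArg (coeff (M+1)) (main_id M t)
  set s : ℚ := (M : ℚ) + 1 with hs
  simp only [map_add, map_sub, coeff_C_mul, coeff_succ_X_mul, coeff_derivative] at h
  linear_combination h

lemma bdiag (t : ℚ) (m : ℕ) (ht : t = (m : ℚ) + 1) :
    ∀ n, m + 1 ≤ n → coeff n (PB ^ (n+1) * EE t) = 0 := by
  subst ht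
  intro n hn
  induction n, hn using Nat.le_induction with
  | base =>
    have h := brec ((m : ℚ) + 1) m
    rw [sub_self, zero_mul] at h
    have hm : ((m : ℚ) + 1) ≠ 0 := by positivity
    exact (mul_eq_zero.mp h).resolve_left hm
  | succ n hmn ih =>
    have h := brec ((m : ℚ) + 1) n
    rw [ih, mul_zero] at h
    have hm : ((n : ℚ) + 1) ≠ 0 := by positivity
    exact (mul_eq_zero.mp h).resolve_left hm

lemma hEres (t : ℚ) : rescale (-1 : ℚ) (EE t) = EE (-t) := by
  rw [EE_eq, rescale_rescale, EE_eq, mul_neg_one]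

lemma hXres : rescale (-1 : ℚ) (X : ℚ⟦X⟧) = -X := by
  ext n
  rw [coeff_rescale, map_neg, coeff_X]
  split_ifs with h
  · subst h; norm_num
  · simp

lemma hexpne : (exp ℚ - 1 : ℚ⟦X⟧) ≠ 0 := by
  intro h
  have h2 := congrArg (coeff 1) h
  rw [map_sub, coeff_exp] at h2
  simp at h2

lemma hE01 : EE (-1) * EE 1 = 1 := by
  rw [hEmul]; norm_num [hEzero]

lemma hPres : rescale (-1 : ℚ) PB = exp ℚ * PB := by
  have h2 := congrArg (rescale (-1 : ℚ)) hPQ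
  rw [map_mul, map_sub, map_one, hXres, ← EE_eq] at h2
  have hPQ' : PB * (EE 1 - 1) = X := by rw [← hexpE]; exact hPQ
  apply mul_right_cancel₀ hexpne
  rw [hexpE]
  linear_combination (-(EE 1)) * h2 + rescale (-1 : ℚ) PB * hE01 - EE 1 * hPQ'

lemma hGodd (m : ℕ) : ∀ n, Odd n → coeff n (PB ^ (2*m+2) * EE ((m : ℚ) + 1)) = 0 := by
  have hadd : EE (((2*m+2 : ℕ) : ℚ)) * EE (-((m : ℚ) + 1)) = EE ((m : ℚ) + 1) := by
    rw [hEmul]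
    congr 1
    push_cast
    ring
  have hsym : rescale (-1 : ℚ) (PB ^ (2*m+2) * EE ((m : ℚ) + 1))
      = PB ^ (2*m+2) * EE ((m : ℚ) + 1) := by
    rw [map_mul, map_pow, hPres, hEres, mul_pow, exp_pow_eq_rescale_exp, ← EE_eq]
    linear_combination PB ^ (2*m+2) * hadd
  intro n hn
  have h := congrArg (coeff n) hsym
  rw [coeff_rescale, hn.neg_one_pow] at h
  linarith

lemma sum_even_support (m : ℕ) (f : ℕ → ℚ) (hf : ∀ j, j < 2*m+3 → Odd j → f j = 0) :
    ∑ j ∈ range (2*m+3), f j = ∑ k ∈ range (m+2), f (2*k) := by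
  have hsub : (range (m+2)).image (fun k => 2*k) ⊆ range (2*m+3) := by
    intro x hx
    simp only [mem_image, mem_range] at hx ⊢
    omega
  calc ∑ j ∈ range (2*m+3), f j
      = ∑ j ∈ (range (m+2)).image (fun k => 2*k), f j := by
        refine (Finset.sum_subset hsub ?_).symm
        intro x hx hnx
        simp only [mem_image, mem_range] at hx hnx
        refine hf x hx ?_
        rcases Nat.even_or_odd x with he | ho
        · obtain ⟨r, hr⟩ := he
          exact absurd ⟨r, by omega, by omega⟩ hnx
        · exact ho
    _ = ∑ k ∈ range (m+2), f (2*k) := Finset.sum_image (by intro a _ b _ h; simp only at h; omega)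

end

end BGAux

/-- `Σ_{k=0}^{m+1} B_{2k} · B^{(2m+2)}_{2m+2-2k}(m+1) / ((2k)! (2m+2-2k)!) = 0`. -/
theorem bernoulli_genBernoulli_sum_eq_zero (m : ℕ) :
    ∑ k ∈ Finset.range (m + 2),
      bernoulli (2 * k) * genBernoulli (2 * m + 2) ((m : ℚ) + 1) (2 * m + 2 - 2 * k) /
        (((2 * k).factorial : ℚ) * ((2 * m + 2 - 2 * k).factorial : ℚ)) = 0 := by
  open BGAux PowerSeries Finset in
  have hgen : ∀ n : ℕ, genBernoulli (2*m+2) ((m : ℚ) + 1) n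
      = (n.factorial : ℚ) * coeff n (PB ^ (2*m+2) * EE ((m : ℚ) + 1)) := fun n => rfl
  have step1 : ∑ k ∈ Finset.range (m + 2),
      bernoulli (2 * k) * genBernoulli (2 * m + 2) ((m : ℚ) + 1) (2 * m + 2 - 2 * k) /
        (((2 * k).factorial : ℚ) * ((2 * m + 2 - 2 * k).factorial : ℚ))
      = ∑ k ∈ Finset.range (m + 2),
          (bernoulli (2*k) / (((2*k).factorial : ℚ))) *
            coeff (2*m+2-2*k) (PB ^ (2*m+2) * EE ((m : ℚ) + 1)) := by
    refine Finset.sum_congr rfl fun k _ => ?_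
    rw [hgen]
    have h1 : (((2*k).factorial : ℚ)) ≠ 0 := Nat.cast_ne_zero.mpr (Nat.factorial_ne_zero _)
    have h2 : (((2*m+2-2*k).factorial : ℚ)) ≠ 0 := Nat.cast_ne_zero.mpr (Nat.factorial_ne_zero _)
    field_simp
  have hodd : ∀ j, j < 2*m+3 → Odd j →
      (bernoulli j / ((j.factorial : ℚ))) *
        coeff (2*m+2-j) (PB ^ (2*m+2) * EE ((m : ℚ) + 1)) = 0 := by
    intro j hj hoj
    have he : Even (2*m+2) := ⟨m+1, by ring⟩
    have hsub : Odd (2*m+2-j) := Nat.Even.sub_odd (by omega) he hoj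
    rw [hGodd m _ hsub, mul_zero]
  have hcm : coeff (2*m+2) (PB * (PB ^ (2*m+2) * EE ((m : ℚ) + 1)))
      = ∑ j ∈ Finset.range (2*m+3),
          (bernoulli j / ((j.factorial : ℚ))) *
            coeff (2*m+2-j) (PB ^ (2*m+2) * EE ((m : ℚ) + 1)) := by
    rw [coeff_mul, Finset.Nat.sum_antidiagonal_eq_sum_range_succ_mk]
    refine Finset.sum_congr rfl fun j _ => ?_
    simp only [PB, coeff_mk]
  have hP3 : PB * (PB ^ (2*m+2) * EE ((m : ℚ) + 1)) = PB ^ (2*m+3) * EE ((m : ℚ) + 1) := by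
    rw [show (2*m+3) = (2*m+2) + 1 from rfl, pow_succ]
    ring
  rw [step1, ← sum_even_support m _ hodd, ← hcm, hP3]
  exact bdiag ((m : ℚ) + 1) m rfl (2*m+2) (by omega)
end

section
/- For every integer m ≥ 0, B^{(2m+3)}_{2m+2}(m+1) = 0, i.e., the (2m+2)-th generalized Bernoulli polynomial of order 2m+3 vanishes at m+1. -/
namespace GenBernoulliAux

open PowerSeries Finset

local notation "B" => bernoulliPowerSeries ℚ
local notation "E" => exp ℚ
local notation "dd" => derivative ℚ

lemma hBE : B * (E - 1) = X := bernoulliPowerSeries_mul_exp_sub_one ℚ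

lemma derivative_exp : dd E = E := by
  ext n
  rw [PowerSeries.coeff_derivative, coeff_exp, coeff_exp]
  have h1 : ((n + 1).factorial : ℚ) ≠ 0 := Nat.cast_ne_zero.mpr (Nat.factorial_ne_zero _)
  have h2 : ((n).factorial : ℚ) ≠ 0 := Nat.cast_ne_zero.mpr (Nat.factorial_ne_zero _)
  simp only [Algebra.algebraMap_self, RingHom.id_apply, Nat.factorial_succ] at *
  field_simp
  try push_cast
  try ring

lemma key : B ^ 2 * E = B - X * dd B := by
  have h := congrArg dd hBE
  rw [Derivation.leibniz, derivative_X, map_sub, derivative_exp, Derivation.map_one_eq_zero,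
    sub_zero, smul_eq_mul, smul_eq_mul] at h
  have hb := hBE
  linear_combination (bernoulliPowerSeries ℚ) * h - (dd B) * hb

/-- `a N = coeff N (B^(N+1))`. -/
noncomputable def a (N : ℕ) : ℚ := PowerSeries.coeff N (B ^ (N + 1))

lemma a_zero : a 0 = 1 := by
  simp [a, bernoulliPowerSeries, PowerSeries.coeff_mk]

lemma coeff_pow_exp (N : ℕ) : PowerSeries.coeff (N + 1) (B ^ (N + 2) * E) = 0 := by
  have h1 : B ^ (N + 2) * E = B ^ (N + 1) - X * (B ^ N * dd B) := by
    have : B ^ (N + 2) * E = B ^ N * (B ^ 2 * E) := by ring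
    rw [this, key]; ring
  have h2 : dd (B ^ (N + 1)) = (N + 1) • (B ^ N • dd B) := by
    simpa using Derivation.leibniz_pow (R := ℚ) (A := ℚ⟦X⟧) (N + 1) (a := bernoulliPowerSeries ℚ)
  have h2' := congrArg (PowerSeries.coeff N) h2
  rw [PowerSeries.coeff_derivative, map_nsmul, nsmul_eq_mul, smul_eq_mul] at h2'
  push_cast at h2'
  have hne : ((N : ℚ) + 1) ≠ 0 := by positivity
  have h4 : PowerSeries.coeff N (B ^ N * dd B)
      = PowerSeries.coeff (N + 1) (B ^ (N + 1)) := by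
    have h6 : ((N:ℚ) + 1) * PowerSeries.coeff N (B ^ N * dd B)
        = ((N:ℚ) + 1) * PowerSeries.coeff (N + 1) (B ^ (N + 1)) := by
      linear_combination -h2'
    exact mul_left_cancel₀ hne h6
  rw [h1, map_sub, PowerSeries.coeff_succ_X_mul, h4]
  ring

lemma a_succ (N : ℕ) : a (N + 1) = - a N := by
  have h1 : B ^ (N + 2) * E = B ^ (N + 2) + X * B ^ (N + 1) := by
    have : B ^ (N + 2) * E = B ^ (N + 2) + B ^ (N + 1) * (B * (E - 1)) := by ring
    rw [this, hBE]; ring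
  have h2 := coeff_pow_exp N
  rw [h1, map_add, PowerSeries.coeff_succ_X_mul] at h2
  unfold a
  linarith [h2]

lemma a_eq (N : ℕ) : a N = (-1) ^ N := by
  induction N with
  | zero => simpa using a_zero
  | succ k ih => rw [a_succ, ih]; ring

lemma pow_mul_sub_one_pow (n i : ℕ) (h : i ≤ n + 1) :
    B ^ (n + 1) * (E - 1) ^ i = X ^ i * B ^ (n + 1 - i) := by
  have : B ^ (n + 1) = B ^ (n + 1 - i) * B ^ i := by
    rw [← pow_add, Nat.sub_add_cancel h]
  rw [this, mul_assoc, ← mul_pow, hBE]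
  ring

lemma expand (n j : ℕ) (h : j ≤ n + 1) :
    B ^ (n + 1) * E ^ j
      = ∑ i ∈ range (j + 1), (j.choose i : ℚ⟦X⟧) * (X ^ i * B ^ (n + 1 - i)) := by
  have hE : E ^ j = ∑ i ∈ range (j + 1), (E - 1) ^ i * 1 ^ (j - i) * (j.choose i : ℚ⟦X⟧) := by
    rw [← add_pow]
    norm_num
  rw [hE, mul_sum]
  refine Finset.sum_congr rfl fun i hi => ?_
  rw [mem_range] at hi
  have : B ^ (n + 1) * ((E - 1) ^ i * 1 ^ (j - i) * (j.choose i : ℚ⟦X⟧))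
      = (j.choose i : ℚ⟦X⟧) * (B ^ (n + 1) * (E - 1) ^ i) := by ring
  rw [this, pow_mul_sub_one_pow n i (le_trans (Nat.lt_succ_iff.mp hi) h)]

lemma coeff_term (n i : ℕ) (h : i ≤ n) :
    PowerSeries.coeff n (X ^ i * B ^ (n + 1 - i)) = (-1 : ℚ) ^ (n - i) := by
  rw [PowerSeries.coeff_X_pow_mul' ]
  rw [if_pos h]
  have : n + 1 - i = (n - i) + 1 := by omega
  rw [this]
  exact (a_eq (n - i))

end GenBernoulliAux

/-- For every integer `m ≥ 0`, `B^{(2m+3)}_{2m+2}(m+1) = 0`. -/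
theorem genBernoulli_odd_order_eq_zero (m : ℕ) :
    genBernoulli (2 * m + 3) ((m : ℚ) + 1) (2 * m + 2) = 0 := by
  open PowerSeries Finset GenBernoulliAux in
  unfold genBernoulli
  have hB : (PowerSeries.mk fun k => bernoulli k / (k.factorial : ℚ))
      = bernoulliPowerSeries ℚ := by
    ext k
    simp [bernoulliPowerSeries, PowerSeries.coeff_mk, div_eq_mul_inv]
  have hE : (PowerSeries.mk fun k => ((m : ℚ) + 1) ^ k / (k.factorial : ℚ))
      = exp ℚ ^ (m + 1) := by
    rw [PowerSeries.exp_pow_eq_rescale_exp]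
    ext k
    rw [PowerSeries.coeff_mk, PowerSeries.coeff_rescale, PowerSeries.coeff_exp]
    push_cast
    simp [div_eq_mul_inv]
  rw [hB, hE]
  have h1 : (2 * m + 3) = (2 * m + 2) + 1 := by ring
  rw [h1, expand (2 * m + 2) (m + 1) (by omega), map_sum]
  have h2 : ∀ i ∈ range (m + 2),
      PowerSeries.coeff (2 * m + 2)
          (((m + 1).choose i : ℚ⟦X⟧) * (X ^ i * bernoulliPowerSeries ℚ ^ (2 * m + 2 + 1 - i)))
        = ((m + 1).choose i : ℚ) * (-1 : ℚ) ^ i := by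
    intro i hi
    rw [mem_range] at hi
    have hi' : i ≤ 2 * m + 2 := by omega
    have hcast : ((m + 1).choose i : ℚ⟦X⟧) = PowerSeries.C (((m + 1).choose i : ℚ)) := by
      push_cast
      simp
    rw [hcast, PowerSeries.coeff_C_mul, coeff_term _ _ hi']
    have hpow : (-1 : ℚ) ^ (2 * m + 2 - i) = (-1 : ℚ) ^ i := by
      have h4 : (-1 : ℚ) ^ (2 * m + 2 - i) * (-1 : ℚ) ^ i = 1 := by
        rw [← pow_add]
        have : 2 * m + 2 - i + i = 2 * (m + 1) := by omega
        rw [this, pow_mul]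
        norm_num
      have h5 : (-1 : ℚ) ^ i * (-1 : ℚ) ^ i = 1 := by
        rw [← pow_add, ← two_mul, pow_mul]
        norm_num
      linear_combination (-1:ℚ)^i * h4 - (-1:ℚ)^(2*m+2-i) * h5
    rw [hpow]
  rw [Finset.sum_congr rfl h2]
  have h3 : ∑ i ∈ range (m + 2), ((m + 1).choose i : ℚ) * (-1 : ℚ) ^ i = 0 := by
    have := add_pow (-1 : ℚ) 1 (m + 1)
    simp only [neg_add_cancel, one_pow, mul_one] at this
    rw [zero_pow (by omega : m + 1 ≠ 0)] at this
    rw [eq_comm] at this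
    calc ∑ i ∈ range (m + 2), ((m + 1).choose i : ℚ) * (-1 : ℚ) ^ i
        = ∑ i ∈ range (m + 1 + 1), (-1 : ℚ) ^ i * ((m + 1).choose i : ℚ) := by
          apply Finset.sum_congr rfl; intro i _; ring
      _ = 0 := by rw [← this]
  rw [h3, mul_zero]
end

section
/- For every integer m ≥ 0, B^{(2m+2)}_{2m}(m+1) = (-1)^m (m!)² / (2m+1). -/
open PowerSeries Finset

noncomputable section

namespace GenBernoulliAux

/-- `bet k = (-1/16)^k * centralBinom k`, defined recursively. -/
def bet : ℕ → ℚ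
  | 0 => 1
  | k + 1 => (-(2 * (k : ℚ) + 1) / (8 * ((k : ℚ) + 1))) * bet k

/-- `rho m = (-1)^m (m!)^2 / (2m+1)!`, defined recursively. -/
def rho : ℕ → ℚ
  | 0 => 1
  | m + 1 => (-((m : ℚ) + 1) / (2 * (2 * (m : ℚ) + 3))) * rho m

/-- The series `(1+X^2/4)^(-1/2)`. -/
def Ps : ℚ⟦X⟧ := PowerSeries.mk fun n => if n % 2 = 0 then bet (n / 2) else 0

/-- The series `2 arcsinh(X/2)`. -/
def Qs : ℚ⟦X⟧ := PowerSeries.mk fun n => if n % 2 = 1 then bet (n / 2) / n else 0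

/-- The series `Ps * Qs`. -/
def Rs : ℚ⟦X⟧ := PowerSeries.mk fun n => if n % 2 = 1 then rho (n / 2) else 0

lemma coeff_Ps_even (k : ℕ) : coeff (2 * k) Ps = bet k := by
  simp [Ps, Nat.mul_div_cancel_left, Nat.mul_mod_right]
lemma coeff_Ps_odd (k : ℕ) : coeff (2 * k + 1) Ps = 0 := by
  simp [Ps, Nat.add_mod, Nat.mul_mod_right]
lemma coeff_Qs_even (k : ℕ) : coeff (2 * k) Qs = 0 := by
  simp [Qs, Nat.mul_mod_right]
lemma coeff_Qs_odd (k : ℕ) : coeff (2 * k + 1) Qs = bet k / (2 * k + 1) := by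
  have h2 : (2 * k + 1) / 2 = k := by omega
  have h1 : (2 * k + 1) % 2 = 1 := by omega
  simp only [Qs, coeff_mk, h1, h2, if_true]
  norm_cast
lemma coeff_Rs_even (k : ℕ) : coeff (2 * k) Rs = 0 := by
  simp [Rs, Nat.mul_mod_right]
lemma coeff_Rs_odd (k : ℕ) : coeff (2 * k + 1) Rs = rho k := by
  have h2 : (2 * k + 1) / 2 = k := by omega
  have h1 : (2 * k + 1) % 2 = 1 := by omega
  simp [Rs, h1, h2]

lemma constantCoeff_Ps : constantCoeff Ps = 1 := by
  have := coeff_Ps_even 0; simpa [bet] using this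
lemma coeff_zero_Qs : coeff 0 Qs = 0 := by simpa using coeff_Qs_even 0
lemma coeff_zero_Rs : coeff 0 Rs = 0 := by simpa using coeff_Rs_even 0

/-- The ODE satisfied by Ps. -/
lemma coeff_X_mul' (f : ℚ⟦X⟧) (n : ℕ) :
    coeff n ((X : ℚ⟦X⟧) * f) = if 1 ≤ n then coeff (n - 1) f else 0 := by
  rw [← pow_one (X : ℚ⟦X⟧), coeff_X_pow_mul']

lemma dPs : (C 4 + X ^ 2) * (d⁄dX ℚ Ps) + X * Ps = 0 := by
  ext n
  rw [map_add, add_mul, map_add, coeff_C_mul, coeff_derivative,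
    coeff_X_pow_mul' (d⁄dX ℚ Ps) 2 n, coeff_X_mul', map_zero]
  rcases n with _ | n
  · norm_num
    rw [show (1:ℕ) = 2*0+1 by norm_num, coeff_Ps_odd]
  · rcases n with _ | n
    · norm_num
      rw [show (2:ℕ) = 2*1 by norm_num, coeff_Ps_even, constantCoeff_Ps]
      simp [bet]; norm_num
    · rw [if_pos (show 2 ≤ n+1+1 by omega), if_pos (show 1 ≤ n+1+1 by omega),
        show n+1+1-2 = n from rfl, show n+1+1-1 = n+1 from rfl, coeff_derivative]
      rcases Nat.even_or_odd n with ⟨j, rfl⟩ | ⟨j, rfl⟩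
      · rw [show j + j + 2 + 1 = 2*(j+1)+1 by ring, coeff_Ps_odd,
          show j + j + 1 = 2*j+1 by ring, coeff_Ps_odd]
        simp
      · rw [show 2*j + 1 + 2 + 1 = 2*(j+2) by ring, coeff_Ps_even,
          show 2*j + 1 + 1 = 2*(j+1) by ring, coeff_Ps_even,
          show bet (j+2) = (-(2 * ((j:ℚ)+1) + 1) / (8 * (((j:ℚ)+1) + 1))) * bet (j+1) from by
            rw [show j + 2 = (j+1) + 1 from rfl, bet]; push_cast; ring_nf]
        push_cast
        have : ((j:ℚ) + 1 + 1) ≠ 0 := by positivity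
        field_simp
        ring

lemma dQs : d⁄dX ℚ Qs = Ps := by
  ext n
  rw [coeff_derivative]
  rcases Nat.even_or_odd n with ⟨j, rfl⟩ | ⟨j, rfl⟩
  · rw [show j + j = 2*j by ring, show 2*j+1 = 2*j+1 from rfl, coeff_Qs_odd, coeff_Ps_even]
    have : (2*(j:ℚ)+1) ≠ 0 := by positivity
    push_cast
    field_simp
  · rw [show 2*j+1+1 = 2*(j+1) by ring, coeff_Qs_even, coeff_Ps_odd]
    ring

lemma eq_C_of_derivative_zero (f : ℚ⟦X⟧) (h : d⁄dX ℚ f = 0) :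
    f = C (constantCoeff f) := by
  ext n
  rcases n with _ | n
  · simp
  · have := congrArg (coeff n) h
    rw [coeff_derivative, map_zero] at this
    have h2 : coeff (n+1) f = 0 := by
      have hn : ((n:ℚ) + 1) ≠ 0 := by positivity
      rcases mul_eq_zero.mp this with h2 | h2
      · exact h2
      · exact absurd h2 hn
    rw [h2, coeff_C]
    simp

lemma psq : (C 4 + X ^ 2) * (Ps * Ps) = C 4 := by
  have hD : d⁄dX ℚ ((C 4 + X ^ 2) * (Ps * Ps)) = 0 := by
    have e1 : d⁄dX ℚ ((C 4 + X ^ 2) * (Ps * Ps))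
        = (C 4 + X ^ 2) * (Ps * d⁄dX ℚ Ps + Ps * d⁄dX ℚ Ps)
          + (Ps * Ps) * (2 * X) := by
      rw [Derivation.leibniz, Derivation.leibniz, map_add, derivative_C,
        show ((X:ℚ⟦X⟧)^2) = X * X by ring, Derivation.leibniz, derivative_X]
      simp only [smul_eq_mul]
      ring
    rw [e1]
    linear_combination (2 * Ps) * dPs
  have h := eq_C_of_derivative_zero _ hD
  have hc : constantCoeff ((C 4 + X ^ 2) * (Ps * Ps)) = 4 := by
    rw [map_mul, map_add, map_mul]
    simp [constantCoeff_Ps]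
  rw [h, hc]

lemma ode_PQ : (C 4 + X ^ 2) * (d⁄dX ℚ (Ps * Qs)) + X * (Ps * Qs) = C 4 := by
  have e1 : d⁄dX ℚ (Ps * Qs) = Ps * Ps + Qs * d⁄dX ℚ Ps := by
    rw [Derivation.leibniz, dQs]
    simp only [smul_eq_mul]
  rw [e1]
  linear_combination psq + Qs * dPs

lemma ode_R : (C 4 + X ^ 2) * (d⁄dX ℚ Rs) + X * Rs = C 4 := by
  ext n
  rw [map_add, add_mul, map_add, coeff_C_mul, coeff_derivative,
    coeff_X_pow_mul' (d⁄dX ℚ Rs) 2 n, coeff_X_mul', coeff_C]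
  rcases n with _ | n
  · norm_num
    rw [show (1:ℕ) = 2*0+1 from rfl, coeff_Rs_odd]
    simp [rho]
  · rcases n with _ | n
    · norm_num
      rw [show (2:ℕ) = 2*1 from rfl, coeff_Rs_even,
        ← coeff_zero_eq_constantCoeff_apply, coeff_zero_Rs]
      ring
    · rw [if_pos (show 2 ≤ n+1+1 by omega), if_pos (show 1 ≤ n+1+1 by omega),
        show n+1+1-2 = n from rfl, show n+1+1-1 = n+1 from rfl, coeff_derivative,
        if_neg (show ¬ (n+1+1 = 0) by omega)]
      rcases Nat.even_or_odd n with ⟨j, rfl⟩ | ⟨j, rfl⟩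
      · rw [show j + j + 2 + 1 = 2*(j+1)+1 by ring, coeff_Rs_odd,
          show j + j + 1 = 2*j+1 by ring, coeff_Rs_odd,
          show rho (j+1) = (-((j:ℚ) + 1) / (2 * (2 * (j:ℚ) + 3))) * rho j from rfl]
        push_cast
        have : (2*(2*(j:ℚ)+3)) ≠ 0 := by positivity
        field_simp
        ring
      · rw [show 2*j + 1 + 2 + 1 = 2*(j+2) by ring, coeff_Rs_even,
          show 2*j + 1 + 1 = 2*(j+1) by ring, coeff_Rs_even]
        ring

lemma ode_unique (f : ℚ⟦X⟧) (hode : (C 4 + X ^ 2) * (d⁄dX ℚ f) + X * f = 0)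
    (h0 : constantCoeff f = 0) : f = 0 := by
  ext n
  rw [map_zero]
  induction n using Nat.strong_induction_on with
  | _ n ih =>
    rcases n with _ | n
    · simpa using h0
    · have := congrArg (coeff n) hode
      rw [map_add, add_mul, map_add, coeff_C_mul, coeff_derivative,
        coeff_X_pow_mul' (d⁄dX ℚ f) 2 n, coeff_X_mul', map_zero] at this
      have hmain : coeff (n+1) f * ((n:ℚ) + 1) = 0 := by
        rcases n with _ | n
        · norm_num at this
          simp [this]
        · rw [if_pos (show 1 ≤ n+1 by omega), show n+1-1 = n from rfl,
            ih n (by omega)] at this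
          rcases n with _ | n
          · norm_num at this
            simp [this]
          · rw [if_pos (show 2 ≤ n+2 by omega), show n+2-2 = n from rfl,
              coeff_derivative, ih (n+1) (by omega)] at this
            push_cast at this ⊢
            linarith
      have hn : ((n:ℚ)+1) ≠ 0 := by positivity
      rcases mul_eq_zero.mp hmain with h2 | h2
      · exact h2
      · exact absurd h2 hn

lemma PQ_eq_R : Ps * Qs = Rs := by
  have h := ode_unique (Ps * Qs - Rs) ?_ ?_
  · exact sub_eq_zero.mp h
  · rw [map_sub]
    linear_combination ode_PQ - ode_R
  · rw [map_sub, map_mul, show constantCoeff Qs = 0 from by rw [← coeff_zero_eq_constantCoeff_apply]; exact coeff_zero_Qs,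
      show constantCoeff Rs = 0 from by rw [← coeff_zero_eq_constantCoeff_apply]; exact coeff_zero_Rs]
    ring

lemma rho_closed (m : ℕ) :
    rho m = (-1)^m * ((m.factorial : ℚ))^2 / ((2*m+1).factorial : ℚ) := by
  induction m with
  | zero => simp [rho]
  | succ m ih =>
    rw [show m + 1 = m + 1 from rfl, rho, ih]
    have h1 : (2*(m+1)+1).factorial = (2*m+3) * ((2*m+2) * (2*m+1).factorial) := by
      rw [show 2*(m+1)+1 = (2*m+2)+1 by ring, Nat.factorial_succ,
        show 2*m+2 = (2*m+1)+1 by ring, Nat.factorial_succ]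
    have h2 : ((m+1).factorial : ℚ) = ((m:ℚ)+1) * (m.factorial : ℚ) := by
      rw [Nat.factorial_succ]; push_cast; ring
    rw [h1, h2]
    have hf1 : ((2*m+1).factorial : ℚ) ≠ 0 := by
      exact_mod_cast Nat.factorial_ne_zero _
    push_cast
    field_simp
    ring

/-! ### The series `u = e^(x/2) - e^(-x/2)` and `h = x e^(x/2)/(e^x - 1)`. -/

def Eh (a : ℚ) : ℚ⟦X⟧ := rescale a (exp ℚ)

lemma coeff_Eh (a : ℚ) (n : ℕ) : coeff n (Eh a) = a ^ n / n.factorial := by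
  rw [Eh, coeff_rescale, coeff_exp]
  simp [algebraMap]
  rw [div_eq_mul_inv]

lemma Eh_mul (a b : ℚ) : Eh a * Eh b = Eh (a + b) :=
  exp_mul_exp_eq_exp_add a b

lemma Eh_zero : Eh 0 = 1 := by
  ext n
  rw [coeff_Eh]
  rcases n with _ | n
  · simp
  · simp [zero_pow]

lemma Eh_one : Eh 1 = exp ℚ := by
  ext n
  rw [coeff_Eh, coeff_exp]
  simp [algebraMap, div_eq_mul_inv]

def us : ℚ⟦X⟧ := Eh (1/2) - Eh (-(1/2))

def hs : ℚ⟦X⟧ := bernoulliPowerSeries ℚ * Eh (1/2)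

lemma hu : hs * us = X := by
  have h : hs * us
      = bernoulliPowerSeries ℚ * (Eh (1/2) * Eh (1/2) - Eh (1/2) * Eh (-(1/2))) := by
    rw [hs, us]; ring
  rw [h, Eh_mul, Eh_mul, show (1/2 : ℚ) + 1/2 = 1 by norm_num,
    show (1/2 : ℚ) + (-(1/2)) = 0 by norm_num, Eh_zero, Eh_one]
  exact bernoulliPowerSeries_mul_exp_sub_one ℚ

lemma dEh (a : ℚ) : d⁄dX ℚ (Eh a) = C a * Eh a := by
  ext n
  rw [coeff_derivative, coeff_C_mul, coeff_Eh, coeff_Eh, Nat.factorial_succ]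
  have h1 : ((n.factorial : ℚ)) ≠ 0 := by exact_mod_cast Nat.factorial_ne_zero _
  have h2 : ((n:ℚ) + 1) ≠ 0 := by positivity
  push_cast
  field_simp
  ring

lemma dus : C 2 * d⁄dX ℚ us = Eh (1/2) + Eh (-(1/2)) := by
  have hc : (C 2 : ℚ⟦X⟧) * C (1/2) = 1 := by rw [← map_mul]; norm_num
  have hc2 : (C 2 : ℚ⟦X⟧) * C (-(1/2)) = -1 := by
    rw [← map_mul]
    rw [show (2 : ℚ) * (-(1/2)) = -1 by norm_num]
    simp
  rw [us, map_sub, dEh, dEh]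
  linear_combination Eh (1/2) * hc - Eh (-(1/2)) * hc2

lemma du_sq : C 4 * (d⁄dX ℚ us) ^ 2 = C 4 + us ^ 2 := by
  have h1 : (C 2 * d⁄dX ℚ us) ^ 2 = (Eh (1/2) + Eh (-(1/2)))^2 := by rw [dus]
  have h2 : Eh (1/2) * Eh (-(1/2)) = 1 := by rw [Eh_mul]; norm_num; exact Eh_zero
  have h3 : ((C : ℚ →+* ℚ⟦X⟧) 2 : ℚ⟦X⟧) * C 2 = C 4 := by rw [← map_mul]; norm_num
  have h4 : (C 4 : ℚ⟦X⟧) = 4 * 1 := by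
    rw [show ((4:ℚ)) = (4:ℚ) from rfl]
    simp [map_ofNat]
  calc C 4 * (d⁄dX ℚ us) ^ 2 = (C 2 * d⁄dX ℚ us) ^ 2 := by
        rw [mul_pow, ← h3]; ring
    _ = C 4 + us ^ 2 := by
        rw [h1, us, h4]
        linear_combination (4 : ℚ⟦X⟧) * h2

lemma coeff_one_us : coeff 1 us = 1 := by
  rw [us, map_sub, coeff_Eh, coeff_Eh]
  norm_num

lemma us_ne : us ≠ 0 := fun h => by simpa [h] using coeff_one_us

lemma constantCoeff_us : constantCoeff us = 0 := by
  rw [← coeff_zero_eq_constantCoeff_apply, us, map_sub, coeff_Eh, coeff_Eh]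
  norm_num

lemma X_dvd_us : (X : ℚ⟦X⟧) ∣ us := by
  rw [X_dvd_iff]; exact constantCoeff_us

lemma constantCoeff_hs : constantCoeff hs = 1 := by
  rw [hs, map_mul, ← coeff_zero_eq_constantCoeff_apply, ← coeff_zero_eq_constantCoeff_apply]
  rw [show coeff 0 (Eh (1/2)) = 1 from by rw [coeff_Eh]; norm_num]
  rw [bernoulliPowerSeries, coeff_mk]
  simp [bernoulli_zero, algebraMap]

lemma hs_ne : hs ≠ 0 := fun h => by simpa [h] using constantCoeff_hs

lemma constantCoeff_dus : constantCoeff (d⁄dX ℚ us) = 1 := by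
  rw [← coeff_zero_eq_constantCoeff_apply, coeff_derivative, coeff_one_us]
  norm_num

/-! ### The key integration-by-parts identity. -/

lemma hu_pow (n : ℕ) : hs ^ n * us ^ n = X ^ n := by
  rw [← mul_pow, hu]

lemma star (k : ℕ) :
    ((k : ℚ⟦X⟧) + 1) * (d⁄dX ℚ us * hs ^ (k + 2))
      = ((k : ℚ⟦X⟧) + 1) * hs ^ (k + 1) - X * d⁄dX ℚ (hs ^ (k + 1)) := by
  have e1 : hs ^ (k+1) * us ^ (k+1) = X ^ (k+1) := hu_pow (k+1)
  have e2 : hs ^ (k+2) * us ^ (k+2) = X ^ (k+2) := hu_pow (k+2)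
  have E : hs ^ (k+1) * (((k : ℚ⟦X⟧)+1) * (us ^ k * d⁄dX ℚ us))
      + us ^ (k+1) * (((k : ℚ⟦X⟧)+1) * (hs ^ k * d⁄dX ℚ hs))
      = ((k : ℚ⟦X⟧)+1) * X ^ k := by
    have h := congrArg (d⁄dX ℚ) e1
    simp only [Derivation.leibniz, Derivation.leibniz_pow, smul_eq_mul, nsmul_eq_mul,
      derivative_X, Nat.add_sub_cancel, mul_one] at h
    push_cast at h
    linear_combination h
  apply mul_left_cancel₀ (pow_ne_zero (k+2) us_ne)
  rw [Derivation.leibniz_pow]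
  simp only [smul_eq_mul, nsmul_eq_mul, Nat.add_sub_cancel]
  push_cast
  linear_combination ((k : ℚ⟦X⟧)+1) * (d⁄dX ℚ us) * e2
    + (-(((k : ℚ⟦X⟧)+1) * us) - ((k : ℚ⟦X⟧)+1) * X * d⁄dX ℚ us) * e1 + (X * us) * E

lemma w_zero : coeff 0 (d⁄dX ℚ us * hs) = 1 := by
  rw [coeff_zero_eq_constantCoeff_apply, map_mul, constantCoeff_dus, constantCoeff_hs]
  norm_num

lemma nat_cast_C (a : ℕ) : ((a : ℚ⟦X⟧)) = C (a : ℚ) := by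
  rw [← map_natCast (C : ℚ →+* ℚ⟦X⟧) a]

lemma w_succ (s : ℕ) : coeff (2*s+2) (d⁄dX ℚ us * hs ^ (2*s+3)) = 0 := by
  have h := congrArg (coeff (2*s+2)) (star (2*s+1))
  rw [show (((2*s+1 : ℕ) : ℚ⟦X⟧) + 1) = C (2*(s:ℚ)+2) from by
      rw [nat_cast_C, show (1 : ℚ⟦X⟧) = C 1 from (map_one (C : ℚ →+* ℚ⟦X⟧)).symm, ← map_add]
      congr 1; push_cast; ring] at h
  rw [map_sub, coeff_C_mul, coeff_C_mul, show 2*s+1+2 = 2*s+3 from rfl,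
    show 2*s+1+1 = 2*s+2 from rfl, coeff_succ_X_mul, coeff_derivative,
    show 2*s+1+1 = 2*s+2 from rfl] at h
  have h2 : (2*(s:ℚ)+2) * coeff (2*s+2) (d⁄dX ℚ us * hs ^ (2*s+3)) = 0 := by
    rw [h]
    push_cast
    ring
  have hne : (2*(s:ℚ)+2) ≠ 0 := by positivity
  rcases mul_eq_zero.mp h2 with h3 | h3
  · exact absurd h3 hne
  · exact h3

lemma Aj (j : ℕ) :
    (2*(j:ℚ)+1) * coeff (2*j) (d⁄dX ℚ us * hs ^ (2*j+2)) = coeff (2*j) (hs ^ (2*j+1)) := by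
  have h := congrArg (coeff (2*j)) (star (2*j))
  rw [show (((2*j : ℕ) : ℚ⟦X⟧) + 1) = C (2*(j:ℚ)+1) from by
      rw [nat_cast_C, show (1 : ℚ⟦X⟧) = C 1 from (map_one (C : ℚ →+* ℚ⟦X⟧)).symm, ← map_add]
      congr 1; push_cast; ring] at h
  rw [map_sub, coeff_C_mul, coeff_C_mul] at h
  rcases j with _ | i
  · simp only [Nat.mul_zero, Nat.zero_add] at h ⊢
    rw [show coeff 0 ((X : ℚ⟦X⟧) * d⁄dX ℚ (hs ^ 1)) = 0 from by
        rw [coeff_zero_eq_constantCoeff_apply, map_mul]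
        simp] at h
    push_cast at h ⊢
    linarith [h]
  · rw [show 2*(i+1) = (2*i+1)+1 by ring, coeff_succ_X_mul, coeff_derivative,
      show 2*i+1+1 = 2*(i+1) by ring] at h
    push_cast at h ⊢
    linarith [h]

/-! ### The truncated expansion of `1/u'` and the key divisibility. -/

lemma coeff_zero_of_X_pow_dvd {N d : ℕ} {f : ℚ⟦X⟧} (h : (X : ℚ⟦X⟧)^N ∣ f) (hd : d < N) :
    coeff d f = 0 := (X_pow_dvd_iff.mp h) d hd

def Pm (m : ℕ) : ℚ⟦X⟧ := ∑ k ∈ range (m+1), C (bet k) * us ^ (2*k)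

def qp (m : ℕ) : Polynomial ℚ := ∑ k ∈ range (m+1), Polynomial.C (bet k) * Polynomial.X ^ (2*k)

lemma qp_coeff (m d : ℕ) (hd : d ≤ 2*m+1) : (qp m).coeff d = coeff d Ps := by
  rw [qp, Polynomial.finset_sum_coeff]
  simp only [Polynomial.coeff_C_mul, Polynomial.coeff_X_pow]
  rcases Nat.even_or_odd d with ⟨e, rfl⟩ | ⟨e, rfl⟩
  · have he : e ∈ range (m+1) := by
      rw [Finset.mem_range]; omega
    rw [Finset.sum_eq_single_of_mem e he
      (fun b _ hb => by rw [if_neg (by omega), mul_zero])]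
    rw [if_pos (by omega), mul_one, show e + e = 2*e by ring, coeff_Ps_even]
  · rw [coeff_Ps_odd, Finset.sum_eq_zero]
    intro b _
    rw [if_neg (by omega), mul_zero]

lemma coe_qp_dvd (m : ℕ) :
    (X : ℚ⟦X⟧)^(2*m+2) ∣ (((qp m) : ℚ⟦X⟧) - Ps) := by
  rw [X_pow_dvd_iff]
  intro d hd
  rw [map_sub, Polynomial.coeff_coe, qp_coeff m d (by omega), sub_self]

lemma psq_qp (m : ℕ) :
    (Polynomial.X : Polynomial ℚ)^(2*m+2)
      ∣ (Polynomial.C 4 + Polynomial.X^2) * (qp m)^2 - Polynomial.C 4 := by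
  have hdvd2 : (X : ℚ⟦X⟧)^(2*m+2) ∣ ((C 4 + X^2) * ((qp m : ℚ⟦X⟧))^2 - C 4) := by
    have heq : (C 4 + X^2) * ((qp m : ℚ⟦X⟧))^2 - C 4
        = (C 4 + X^2) * (((qp m : ℚ⟦X⟧) - Ps) * (((qp m : ℚ⟦X⟧) - Ps) + 2 * Ps)) := by
      linear_combination psq
    rw [heq]
    exact Dvd.dvd.mul_left (Dvd.dvd.mul_right (coe_qp_dvd m) _) _
  rw [Polynomial.X_pow_dvd_iff]
  intro d hd
  have h2 := coeff_zero_of_X_pow_dvd hdvd2 hd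
  rw [← h2, ← Polynomial.coeff_coe]
  congr 1
  simp only [Polynomial.coe_sub, Polynomial.coe_mul, Polynomial.coe_add, Polynomial.coe_pow,
    Polynomial.coe_C, Polynomial.coe_X]

lemma aeval_qp (m : ℕ) : Polynomial.aeval us (qp m) = Pm m := by
  rw [qp, map_sum, Pm]
  apply Finset.sum_congr rfl
  intro k _
  rw [map_mul, map_pow, Polynomial.aeval_C, Polynomial.aeval_X]
  rfl

lemma constantCoeff_Pm (m : ℕ) : constantCoeff (Pm m) = 1 := by
  rw [Pm, map_sum, Finset.sum_eq_single_of_mem 0 (by simp)]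
  · simp [bet]
  · intro k _ hk
    rw [map_mul, map_pow, constantCoeff_us, constantCoeff_C,
      zero_pow (by omega : 2*k ≠ 0), mul_zero]

lemma key_dvd (m : ℕ) : (X : ℚ⟦X⟧)^(2*m+2) ∣ (d⁄dX ℚ us * Pm m - 1) := by
  obtain ⟨w, hw⟩ := psq_qp m
  have haev := congrArg (Polynomial.aeval us) hw
  simp only [map_sub, map_add, map_mul, map_pow, Polynomial.aeval_C, Polynomial.aeval_X] at haev
  rw [aeval_qp] at haev
  have halg : ∀ a : ℚ, (algebraMap ℚ ℚ⟦X⟧) a = C a := fun a => rfl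
  rw [halg] at haev
  set V := d⁄dX ℚ us * Pm m with hV
  have h4 : C 4 * (V^2 - 1) = (C 4 + us^2) * (Pm m)^2 - C 4 := by
    have h41 : (C 4 : ℚ⟦X⟧) * 1 = C 4 := mul_one _
    rw [hV]
    calc C 4 * ((d⁄dX ℚ us * Pm m)^2 - 1)
        = (C 4 * (d⁄dX ℚ us)^2) * (Pm m)^2 - C 4 := by ring
      _ = (C 4 + us^2) * (Pm m)^2 - C 4 := by rw [du_sq]
  have hdv : (X : ℚ⟦X⟧)^(2*m+2) ∣ C 4 * (V^2 - 1) := by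
    rw [h4, haev]
    exact Dvd.dvd.mul_right (pow_dvd_pow_of_dvd X_dvd_us (2*m+2)) _
  have hdv2 : (X : ℚ⟦X⟧)^(2*m+2) ∣ (V^2 - 1) := by
    have : V^2 - 1 = C (1/4) * (C 4 * (V^2 - 1)) := by
      rw [← mul_assoc, ← map_mul]
      norm_num
    rw [this]
    exact Dvd.dvd.mul_left hdv _
  have hunit : ∃ iv, (V + 1) * iv = 1 := by
    apply IsUnit.exists_right_inv
    rw [PowerSeries.isUnit_iff_constantCoeff, map_add, map_mul, constantCoeff_dus,
      constantCoeff_Pm, map_one]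
    norm_num
  obtain ⟨iv, hiv⟩ := hunit
  have hfin : V - 1 = (V^2 - 1) * iv := by
    linear_combination (1 - V) * hiv
  rw [hfin]
  exact Dvd.dvd.mul_right hdv2 iv

/-! ### The residue computations. -/

lemma term_split (e k : ℕ) : us^(2*k) * hs^(2*k + e) = X^(2*k) * hs^e := by
  linear_combination hs^e * hu_pow (2*k)

lemma r_val (m j : ℕ) (hj : j ≤ m) : coeff (2*j) (hs^(2*j+1)) = bet j := by
  have hsplit : (hs^(2*j+1) : ℚ⟦X⟧)
      = hs^(2*j+1) * (d⁄dX ℚ us * Pm m) - hs^(2*j+1) * (d⁄dX ℚ us * Pm m - 1) := by ring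
  have h0 : coeff (2*j) (hs^(2*j+1) * (d⁄dX ℚ us * Pm m - 1)) = 0 :=
    coeff_zero_of_X_pow_dvd (Dvd.dvd.mul_left (key_dvd m) _) (by omega)
  rw [hsplit, map_sub, h0, sub_zero]
  have hexp : hs^(2*j+1) * (d⁄dX ℚ us * Pm m)
      = ∑ k ∈ range (m+1), C (bet k) * (d⁄dX ℚ us * (us^(2*k) * hs^(2*j+1))) := by
    rw [Pm, Finset.mul_sum, Finset.mul_sum]
    apply Finset.sum_congr rfl
    intro k _
    ring
  rw [hexp, map_sum, Finset.sum_eq_single_of_mem j (by rw [Finset.mem_range]; omega)]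
  · rw [show 2*j+1 = 2*j+1 from rfl, term_split 1 j]
    have harr : C (bet j) * (d⁄dX ℚ us * ((X:ℚ⟦X⟧)^(2*j) * hs^1))
        = (X:ℚ⟦X⟧)^(2*j) * (C (bet j) * (d⁄dX ℚ us * hs^1)) := by ring
    rw [harr, coeff_X_pow_mul', if_pos (le_refl (2*j)), show 2*j - 2*j = 0 by omega,
      coeff_C_mul, pow_one, w_zero, mul_one]
  · intro k hk hkj
    rcases Nat.lt_or_ge k j with hlt | hge
    · -- k < j
      obtain ⟨i, hi⟩ : ∃ i, j = k + (i + 1) := ⟨j - k - 1, by omega⟩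
      subst hi
      rw [show 2*(k+(i+1))+1 = 2*k + (2*(i+1)+1) by ring, term_split (2*(i+1)+1) k]
      have harr : C (bet k) * (d⁄dX ℚ us * ((X:ℚ⟦X⟧)^(2*k) * hs^(2*(i+1)+1)))
          = (X:ℚ⟦X⟧)^(2*k) * (C (bet k) * (d⁄dX ℚ us * hs^(2*(i+1)+1))) := by ring
      rw [harr, coeff_X_pow_mul', if_pos (show 2*k ≤ 2*(k+(i+1)) by omega),
        show 2*(k+(i+1)) - 2*k = 2*i+2 by omega, coeff_C_mul,
        show 2*(i+1)+1 = 2*i+3 by ring, w_succ, mul_zero]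
    · -- k > j
      have hgt : j < k := by omega
      obtain ⟨t, ht⟩ : ∃ t, 2*k = (2*j+1) + t := ⟨2*k - (2*j+1), by omega⟩
      have hsp : us^((2*j+1) + t) * hs^(2*j+1) = X^(2*j+1) * us^t := by
        rw [pow_add]
        linear_combination us^t * hu_pow (2*j+1)
      rw [ht, hsp]
      have harr : C (bet k) * (d⁄dX ℚ us * ((X:ℚ⟦X⟧)^(2*j+1) * us^t))
          = (X:ℚ⟦X⟧)^(2*j+1) * (C (bet k) * (d⁄dX ℚ us * us^t)) := by ring
      rw [harr, coeff_X_pow_mul']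
      rw [if_neg (by omega)]

lemma Aval (j : ℕ) :
    coeff (2*j) (d⁄dX ℚ us * hs^(2*j+2)) = bet j / (2*(j:ℚ)+1) := by
  have h := Aj j
  rw [r_val j j le_rfl] at h
  have hne : (2*(j:ℚ)+1) ≠ 0 := by positivity
  rw [eq_div_iff hne]
  linarith [h]

lemma main_sum (m : ℕ) : coeff (2*m) (hs^(2*m+2))
    = ∑ k ∈ range (m+1), bet k * (bet (m-k) / (2*((m-k : ℕ):ℚ)+1)) := by
  have hsplit : (hs^(2*m+2) : ℚ⟦X⟧)
      = hs^(2*m+2) * (d⁄dX ℚ us * Pm m) - hs^(2*m+2) * (d⁄dX ℚ us * Pm m - 1) := by ring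
  have h0 : coeff (2*m) (hs^(2*m+2) * (d⁄dX ℚ us * Pm m - 1)) = 0 :=
    coeff_zero_of_X_pow_dvd (Dvd.dvd.mul_left (key_dvd m) _) (by omega)
  rw [hsplit, map_sub, h0, sub_zero]
  have hexp : hs^(2*m+2) * (d⁄dX ℚ us * Pm m)
      = ∑ k ∈ range (m+1), C (bet k) * (d⁄dX ℚ us * (us^(2*k) * hs^(2*m+2))) := by
    rw [Pm, Finset.mul_sum, Finset.mul_sum]
    apply Finset.sum_congr rfl
    intro k _
    ring
  rw [hexp, map_sum]
  apply Finset.sum_congr rfl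
  intro k hk
  have hkm : k ≤ m := by
    rw [Finset.mem_range] at hk; omega
  rw [show 2*m+2 = 2*k + (2*(m-k)+2) by omega, term_split (2*(m-k)+2) k]
  have harr : C (bet k) * (d⁄dX ℚ us * ((X:ℚ⟦X⟧)^(2*k) * hs^(2*(m-k)+2)))
      = (X:ℚ⟦X⟧)^(2*k) * (C (bet k) * (d⁄dX ℚ us * hs^(2*(m-k)+2))) := by ring
  rw [harr, coeff_X_pow_mul', if_pos (show 2*k ≤ 2*m by omega),
    show 2*m - 2*k = 2*(m-k) by omega, coeff_C_mul, Aval]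

lemma sum_even_split (F : ℕ → ℚ) (n : ℕ) :
    ∑ i ∈ range (2*n), F i = ∑ k ∈ range n, (F (2*k) + F (2*k+1)) := by
  induction n with
  | zero => simp
  | succ n ih =>
    rw [show 2*(n+1) = (2*n+1)+1 by ring, Finset.sum_range_succ, Finset.sum_range_succ, ih,
      Finset.sum_range_succ]
    ring

lemma coeff_PQ (m : ℕ) : coeff (2*m+1) (Ps * Qs)
    = ∑ k ∈ range (m+1), bet k * (bet (m-k) / (2*((m-k : ℕ):ℚ)+1)) := by
  rw [coeff_mul, Finset.Nat.sum_antidiagonal_eq_sum_range_succ_mk]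
  dsimp only
  rw [show (2*m+1).succ = 2*(m+1) by omega, sum_even_split]
  apply Finset.sum_congr rfl
  intro k hk
  have hkm : k ≤ m := by rw [Finset.mem_range] at hk; omega
  rw [coeff_Ps_even, show 2*m+1 - 2*k = 2*(m-k)+1 by omega, coeff_Qs_odd,
    coeff_Ps_odd, zero_mul, add_zero]

lemma hs_coeff_val (m : ℕ) : coeff (2*m) (hs^(2*m+2)) = rho m := by
  rw [main_sum, ← coeff_PQ, PQ_eq_R, coeff_Rs_odd]

/-! ### Final assembly. -/

lemma Eh_pow (a : ℚ) (n : ℕ) : Eh a ^ n = Eh ((n : ℚ) * a) := by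
  induction n with
  | zero => rw [pow_zero, Nat.cast_zero, zero_mul, Eh_zero]
  | succ n ih =>
    rw [pow_succ, ih, Eh_mul,
      show ((n:ℚ)) * a + a = ((n:ℕ)+1 : ℕ) * a from by push_cast; ring]

lemma hs_pow_eq (m : ℕ) :
    bernoulliPowerSeries ℚ ^ (2*m+2) * Eh ((m:ℚ)+1) = hs^(2*m+2) := by
  rw [hs, mul_pow, Eh_pow,
    show ((2*m+2 : ℕ):ℚ) * (1/2) = (m:ℚ)+1 from by push_cast; ring]

lemma mk_bernoulli_eq : (PowerSeries.mk fun k => bernoulli k / (k.factorial : ℚ))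
    = bernoulliPowerSeries ℚ := by
  ext n
  rw [coeff_mk, bernoulliPowerSeries, coeff_mk]
  simp [algebraMap, div_eq_mul_inv]

lemma mk_exp_eq (t : ℚ) : (PowerSeries.mk fun k => t ^ k / (k.factorial : ℚ)) = Eh t := by
  ext n
  rw [coeff_mk, coeff_Eh]

lemma main_value (m : ℕ) :
    coeff (2*m) ((PowerSeries.mk fun k => bernoulli k / (k.factorial : ℚ)) ^ (2*m+2)
      * PowerSeries.mk fun k => ((m:ℚ)+1) ^ k / (k.factorial : ℚ)) = rho m := by
  rw [mk_bernoulli_eq, mk_exp_eq, hs_pow_eq, hs_coeff_val]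

end GenBernoulliAux







end

/-- `B^{(2m+2)}_{2m}(m+1) = (-1)^m (m!)² / (2m+1)`. -/
theorem genBernoulli_top_value (m : ℕ) :
    genBernoulli (2 * m + 2) ((m : ℚ) + 1) (2 * m) =
      (-1) ^ m * ((m.factorial : ℚ)) ^ 2 / (2 * m + 1) := by
  rw [genBernoulli, GenBernoulliAux.main_value, GenBernoulliAux.rho_closed]
  have h1 : ((2*m+1).factorial : ℚ) = (2*(m:ℚ)+1) * ((2*m).factorial : ℚ) := by
    rw [show 2*m+1 = (2*m)+1 from rfl, Nat.factorial_succ]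
    push_cast
    ring
  have h2 : ((2*m).factorial : ℚ) ≠ 0 := by exact_mod_cast Nat.factorial_ne_zero _
  have h3 : (2*(m:ℚ)+1) ≠ 0 := by positivity
  rw [h1]
  field_simp
end

section
/- For every integer m ≥ 2, B^{(2m+1)}_{2m-4}(m) = (-1)^m · 4! · (2m-4)!/(2m)! · ((m-1)!)² · H_{m-1}^{(2)}, where H_{m-1}^{(2)} = Σ_{j=1}^{m-1} 1/j². -/
open PowerSeries

noncomputable def shq : ℚ⟦X⟧ := PowerSeries.mk fun k => if Even k then 1 / ((k+1).factorial : ℚ) else 0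
noncomputable def chq : ℚ⟦X⟧ := PowerSeries.mk fun k => if Even k then 1 / (k.factorial : ℚ) else 0
noncomputable def Gq : ℚ⟦X⟧ := shq⁻¹


lemma shq0 : constantCoeff shq = 1 := by
  rw [← coeff_zero_eq_constantCoeff_apply, shq, coeff_mk]; norm_num

lemma shGq : shq * Gq = 1 :=
  PowerSeries.mul_inv_cancel shq (by rw [shq0]; norm_num)

lemma coeff0_Gpow (k : ℕ) : coeff 0 (Gq ^ k) = 1 := by
  rw [coeff_zero_eq_constantCoeff_apply, map_pow, Gq, constantCoeff_inv, shq0]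
  norm_num

lemma chq_add : chq + X * shq = exp ℚ := by
  ext n
  rcases n with _ | n
  · rw [map_add, coeff_zero_X_mul, coeff_exp, chq, coeff_mk]; norm_num
  · rw [map_add, coeff_succ_X_mul, coeff_exp]
    rcases Nat.even_or_odd n with he | ho
    · have h2 : ¬ Even (n+1) := by simp [Nat.even_add_one, he]
      simp [chq, shq, h2, he]
    · have h1 : Even (n+1) := by simp [Nat.even_add_one, Nat.not_even_iff_odd, ho]
      have h3 : ¬ Even n := Nat.not_even_iff_odd.mpr ho
      simp [chq, shq, h1, h3]

lemma chq_sub : evalNegHom (exp ℚ) = chq - X * shq := by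
  ext n
  rw [evalNegHom, coeff_rescale, coeff_exp, map_sub]
  rcases n with _ | n
  · rw [coeff_zero_X_mul, chq, coeff_mk]; norm_num
  · rw [coeff_succ_X_mul]
    rcases Nat.even_or_odd n with he | ho
    · have h2 : ¬ Even (n+1) := by simp [Nat.even_add_one, he]
      have h4 : (-1 : ℚ) ^ (n+1) = -1 := (Nat.not_even_iff_odd.mp h2).neg_one_pow
      simp [chq, shq, h2, he, h4]
    · have h1 : Even (n+1) := by simp [Nat.even_add_one, Nat.not_even_iff_odd, ho]
      have h3 : ¬ Even n := Nat.not_even_iff_odd.mpr ho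
      have h4 : (-1 : ℚ) ^ (n+1) = 1 := h1.neg_one_pow
      simp [chq, shq, h1, h3, h4]

lemma Einv : exp ℚ * (chq - X * shq) = 1 := by
  rw [← chq_sub]; exact exp_mul_exp_neg_eq_one (A := ℚ)

lemma hyperbolic : chq * chq - (X * shq) * (X * shq) = 1 := by
  have h := Einv
  rw [← chq_add] at h
  linear_combination h
lemma coeff_X_mul_D (f : ℚ⟦X⟧) (n : ℕ) :
    coeff n (X * d⁄dX ℚ f) = n * coeff n f := by
  cases n with
  | zero => simp [coeff_zero_X_mul]
  | succ n => rw [coeff_succ_X_mul, coeff_derivative]; push_cast; ring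

lemma Dshq : X * d⁄dX ℚ shq = chq - shq := by
  ext n
  rw [map_sub, coeff_X_mul_D]
  rcases Nat.even_or_odd n with he | ho
  · have hne : ((n+1).factorial : ℚ) ≠ 0 := Nat.cast_ne_zero.mpr (Nat.factorial_ne_zero _)
    have hne2 : (n.factorial : ℚ) ≠ 0 := Nat.cast_ne_zero.mpr (Nat.factorial_ne_zero _)
    have hfs : ((n+1).factorial : ℚ) = (n+1) * n.factorial := by
      rw [Nat.factorial_succ]; push_cast; ring
    simp only [shq, chq, coeff_mk, if_pos he]
    field_simp [hfs]
    rw [hfs]; ring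
  · have h3 : ¬ Even n := Nat.not_even_iff_odd.mpr ho
    simp [shq, chq, h3]

lemma Dchq : X * d⁄dX ℚ chq = X * (X * shq) := by
  ext n
  rw [coeff_X_mul_D]
  rcases n with _ | n
  · simp [coeff_zero_X_mul]
  · rw [coeff_succ_X_mul]
    rcases n with _ | n
    · simp [chq, shq, coeff_zero_X_mul, coeff_mk]
    · rw [coeff_succ_X_mul]
      rcases Nat.even_or_odd n with he | ho
      · have h1 : Even (n+2) := by simpa [Nat.even_add] using he.add (by norm_num : Even 2)
        have hfs : ((n+2).factorial : ℚ) = (n+2) * (n+1).factorial := by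
          rw [show n+2 = (n+1)+1 from rfl, Nat.factorial_succ]; push_cast; ring
        have hne : ((n+1).factorial : ℚ) ≠ 0 := Nat.cast_ne_zero.mpr (Nat.factorial_ne_zero _)
        simp only [shq, chq, coeff_mk, if_pos he, if_pos h1]
        field_simp [hfs]
        rw [Nat.factorial_succ (n+1)]; push_cast; ring
      · have h3 : ¬ Even n := Nat.not_even_iff_odd.mpr ho
        have h4 : ¬ Even (n+2) := by simpa [Nat.even_add] using h3
        simp [shq, chq, h3, h4]

lemma DGq : X * d⁄dX ℚ Gq = Gq - chq * Gq ^ 2 := by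
  have h0 : shq * d⁄dX ℚ Gq + Gq * d⁄dX ℚ shq = 0 := by
    have := Derivation.leibniz (d⁄dX ℚ) shq Gq
    rw [shGq] at this
    rw [Derivation.map_one_eq_zero] at this
    -- this : 0 = shq • d Gq + Gq • d shq
    simpa [smul_eq_mul] using this.symm
  linear_combination (X * Gq) * h0 + (- Gq^2) * Dshq + (Gq - X * d⁄dX ℚ Gq) * shGq
lemma DGpow (k : ℕ) : X * d⁄dX ℚ (Gq ^ (k+1)) =
    C ((k : ℚ)+1) * (Gq ^ (k+1) - chq * Gq ^ (k+2)) := by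
  rw [Derivation.leibniz_pow, Nat.add_sub_cancel, nsmul_eq_mul, smul_eq_mul,
    ← map_natCast (C (R := ℚ)) (k+1)]
  push_cast
  linear_combination (C ((k:ℚ)+1)) * Gq ^ k * DGq

lemma master (a n : ℕ) :
    ((a:ℚ)+1)*((a:ℚ)+2) * coeff (n+2) (Gq^(a+3)) =
      ((a:ℚ)-n)*((a:ℚ)-n-1) * coeff (n+2) (Gq^(a+1)) - ((a:ℚ)+1)^2 * coeff n (Gq^(a+1)) := by
  have hII : X * d⁄dX ℚ (chq * Gq^(a+2)) =
      X * (X * Gq^(a+1)) + C ((a:ℚ)+2) * (chq * Gq^(a+2))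
        - C ((a:ℚ)+2) * Gq^(a+3) - C ((a:ℚ)+2) * (X * (X * Gq^(a+1))) := by
    have hl' : X * d⁄dX ℚ (chq * Gq^(a+2)) =
        chq * (X * d⁄dX ℚ (Gq^(a+2))) + Gq^(a+2) * (X * d⁄dX ℚ chq) := by
      rw [Derivation.leibniz (d⁄dX ℚ) chq (Gq^(a+2))]
      simp only [smul_eq_mul]; ring
    rw [Dchq, show a+2 = (a+1)+1 from rfl, DGpow (a+1)] at hl'
    rw [hl']
    push_cast
    rw [show ((a:ℚ)+1+1) = ((a:ℚ)+2) from by ring]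
    linear_combination (-(C ((a:ℚ)+2)) * Gq^(a+3)) * hyperbolic +
      (X^2*Gq^(a+1) - C ((a:ℚ)+2) * X^2 * Gq^(a+1)*(shq*Gq+1)) * shGq
  have e1 := congrArg (coeff (n+2)) (DGpow a)
  have e2 := congrArg (coeff (n+2)) hII
  rw [coeff_X_mul_D] at e1 e2
  rw [map_sub, map_sub, map_add, coeff_C_mul, coeff_C_mul, coeff_C_mul] at e2
  simp only [show n+2 = (n+1)+1 from rfl, coeff_succ_X_mul] at e2
  simp only [show (n+1)+1 = n+2 from rfl] at e2
  rw [coeff_C_mul, map_sub] at e1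
  push_cast at e1 e2
  linear_combination ((a:ℚ)-n) * e1 + ((a:ℚ)+1) * e2
lemma rescale_neg_sh : rescale (-1 : ℚ) shq = shq := by
  ext n
  rw [coeff_rescale]
  rcases Nat.even_or_odd n with he | ho
  · rw [he.neg_one_pow, one_mul]
  · simp [shq, Nat.not_even_iff_odd.mpr ho]

lemma rescale_neg_G : rescale (-1 : ℚ) Gq = Gq := by
  have h : rescale (-1:ℚ) Gq * shq = 1 := by
    conv_lhs => rw [← rescale_neg_sh]
    rw [← map_mul, mul_comm, shGq, map_one]
  calc rescale (-1:ℚ) Gq = rescale (-1:ℚ) Gq * (shq * Gq) := by rw [shGq, mul_one]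
    _ = (rescale (-1:ℚ) Gq * shq) * Gq := by ring
    _ = Gq := by rw [h, one_mul]

lemma Godd (k i : ℕ) : coeff (2*i+1) (Gq^k) = 0 := by
  have h : rescale (-1:ℚ) (Gq^k) = Gq^k := by rw [map_pow, rescale_neg_G]
  have h2 := congrArg (coeff (2*i+1)) h
  rw [coeff_rescale, (by exact ⟨i, by ring⟩ : Odd (2*i+1)).neg_one_pow] at h2
  linarith

lemma factq_ne (n : ℕ) : (n.factorial : ℚ) ≠ 0 := Nat.cast_ne_zero.mpr (Nat.factorial_ne_zero _)

lemma hPmk : (PowerSeries.mk fun k => (bernoulli k) / (k.factorial : ℚ)) = bernoulliPowerSeries ℚ := by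
  ext n
  rw [coeff_mk, bernoulliPowerSeries, coeff_mk]
  simp

lemma hmkE (t : ℚ) : (PowerSeries.mk fun k => t^k / (k.factorial : ℚ)) = rescale t (exp ℚ) := by
  ext n
  rw [coeff_mk, coeff_rescale, coeff_exp]
  simp [div_eq_mul_inv]

lemma hE2 : exp ℚ * exp ℚ - 1 = 2 * X * (shq * exp ℚ) := by
  linear_combination hyperbolic - (exp ℚ - X*shq + chq) * chq_add

lemma rescale2P : rescale (2:ℚ) (bernoulliPowerSeries ℚ) = (chq - X * shq) * Gq := by
  have hb := congrArg (rescale (2:ℚ)) (bernoulliPowerSeries_mul_exp_sub_one ℚ)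
  rw [map_mul, map_sub, map_one, rescale_X] at hb
  have he2 : rescale (2:ℚ) (exp ℚ) = exp ℚ * exp ℚ := by
    rw [show (2:ℚ) = ((2:ℕ):ℚ) from by norm_num, ← exp_pow_eq_rescale_exp]
    ring
  rw [he2, hE2] at hb
  have h2X : (2 * X : ℚ⟦X⟧) ≠ 0 := by
    have h2 : (2:ℚ⟦X⟧) ≠ 0 := by
      intro hcon
      have := congrArg (constantCoeff (R := ℚ)) hcon
      rw [map_ofNat, map_zero] at this
      norm_num at this
    exact mul_ne_zero h2 X_ne_zero
  have h2 : rescale (2:ℚ) (bernoulliPowerSeries ℚ) * (shq * exp ℚ) = 1 := by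
    apply mul_left_cancel₀ h2X
    rw [mul_one]
    calc 2 * X * (rescale (2:ℚ) (bernoulliPowerSeries ℚ) * (shq * exp ℚ))
        = rescale (2:ℚ) (bernoulliPowerSeries ℚ) * (2 * X * (shq * exp ℚ)) := by ring
      _ = C (2:ℚ) * X := hb
      _ = 2 * X := by rw [map_ofNat]
  calc rescale (2:ℚ) (bernoulliPowerSeries ℚ)
      = rescale (2:ℚ) (bernoulliPowerSeries ℚ) * ((shq * Gq) * (exp ℚ * (chq - X * shq))) := by
        rw [shGq, Einv]; ring
    _ = (rescale (2:ℚ) (bernoulliPowerSeries ℚ) * (shq * exp ℚ)) * (Gq * (chq - X * shq)) := by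
        ring
    _ = (chq - X * shq) * Gq := by rw [h2]; ring

lemma hsh5 (j : ℕ) : shq * Gq^(2*j+5) = Gq^(2*j+4) := by
  calc shq * Gq^(2*j+5) = (shq * Gq) * Gq^(2*j+4) := by ring
    _ = Gq^(2*j+4) := by rw [shGq, one_mul]

lemma hXodd (j : ℕ) : coeff (2*j) (X * Gq^(2*j+4)) = 0 := by
  cases j with
  | zero => simpa using coeff_zero_X_mul (Gq^(2*0+4))
  | succ i =>
    rw [show 2*(i+1) = (2*i+1)+1 from by ring, coeff_succ_X_mul, Godd]

lemma key (j : ℕ) : (2:ℚ)^(2*j) * coeff (2*j)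
      ((bernoulliPowerSeries ℚ)^(2*j+5) * rescale ((j:ℚ)+2) (exp ℚ))
    = coeff (2*j) (chq * Gq^(2*j+5)) := by
  have hres : rescale (2:ℚ) ((bernoulliPowerSeries ℚ)^(2*j+5) * rescale ((j:ℚ)+2) (exp ℚ))
      = (chq - X * shq) * Gq^(2*j+5) := by
    rw [map_mul, map_pow, rescale2P, rescale_rescale,
      show ((j:ℚ)+2)*2 = ((2*j+4 : ℕ) : ℚ) from by push_cast; ring,
      ← exp_pow_eq_rescale_exp]
    have hone' : ((chq - X * shq) * Gq)^(2*j+4) * (exp ℚ)^(2*j+4) = Gq^(2*j+4) := by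
      rw [← mul_pow, show ((chq - X*shq) * Gq) * exp ℚ = ((exp ℚ) * (chq - X*shq)) * Gq from by ring,
        Einv, one_mul]
    calc ((chq - X*shq)*Gq)^(2*j+5) * (exp ℚ)^(2*j+4)
        = (((chq - X*shq)*Gq)^(2*j+4) * (exp ℚ)^(2*j+4)) * ((chq - X*shq)*Gq) := by
          rw [show 2*j+5 = 2*j+4+1 from rfl, pow_succ]; ring
      _ = Gq^(2*j+4) * ((chq - X*shq)*Gq) := by rw [hone']
      _ = (chq - X*shq) * Gq^(2*j+5) := by rw [show 2*j+5 = 2*j+4+1 from rfl, pow_succ]; ring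
  have h := congrArg (coeff (2*j)) hres
  rw [coeff_rescale] at h
  rw [h, sub_mul, map_sub, mul_assoc, hsh5, hXodd, sub_zero]

lemma hch5 (j : ℕ) : (2*(j:ℚ)+4) * coeff (2*j) (chq * Gq^(2*j+5))
    = 4 * coeff (2*j) (Gq^(2*j+4)) := by
  have e := congrArg (coeff (2*j)) (DGpow (2*j+3))
  rw [show 2*j+3+1 = 2*j+4 from by ring, show 2*j+3+2 = 2*j+5 from by ring,
    coeff_X_mul_D, coeff_C_mul, map_sub] at e
  push_cast at e
  linear_combination e
/-- The generalized harmonic number `H_m^{(r)} = Σ_{j=1}^m 1/j^r`. -/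
def harmonic' (m r : ℕ) : ℚ := ∑ j ∈ Finset.range m, 1 / ((j + 1 : ℚ)) ^ r

lemma Dlem (j : ℕ) : coeff (2*j) (Gq^(2*j+2)) * ((2*j+2).factorial : ℚ) =
    (-1)^j * 2^(2*j+1) * ((j+1).factorial : ℚ) * (j.factorial : ℚ) := by
  induction j with
  | zero =>
    rw [show 2*0 = 0 from rfl, coeff0_Gpow]
    norm_num [Nat.factorial]
  | succ j ih =>
    have h := master (2*j+1) (2*j)
    push_cast at h
    rw [show 2*j+1+3 = 2*j+2+2 from by ring, show 2*j+1+1 = 2*j+2 from by ring] at h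
    rw [show 2*(j+1) = 2*j+2 from by ring] at *
    have hA : ((2*(j:ℚ)+1+1) * (2*(j:ℚ)+1+2)) ≠ 0 := by positivity
    apply mul_left_cancel₀ hA
    have hf1 : ((2*j+2+2).factorial : ℚ)
        = ((2*(j:ℚ)+4)) * ((2*(j:ℚ)+3)) * ((2*j+2).factorial : ℚ) := by
      rw [show 2*j+2+2 = (2*j+3)+1 from by ring, Nat.factorial_succ,
        show 2*j+3 = (2*j+2)+1 from by ring, Nat.factorial_succ]
      push_cast; ring
    have hf2 : ((j+1+1).factorial : ℚ) = ((j:ℚ)+2) * ((j+1).factorial : ℚ) := by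
      rw [Nat.factorial_succ]; push_cast; ring
    have hf3 : ((j+1).factorial : ℚ) = ((j:ℚ)+1) * (j.factorial : ℚ) := by
      rw [Nat.factorial_succ]; push_cast; ring
    rw [hf1, hf2]
    linear_combination ((2*(j:ℚ)+4) * (2*(j:ℚ)+3) * ((2*j+2).factorial : ℚ)) * h
      + (-(2*(j:ℚ)+2)^2 * (2*(j:ℚ)+4) * (2*(j:ℚ)+3)) * ih
      + (16*(-1:ℚ)^j*2^(2*j)*(2*(j:ℚ)^3+9*(j:ℚ)^2+13*(j:ℚ)+6)*((j+1).factorial:ℚ)) * hf3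

lemma Clem (j : ℕ) : coeff (2*j) (Gq^(2*j+4)) * ((2*j+4).factorial : ℚ) =
    (-1)^j * 3 * 2^(2*j+2) * ((j:ℚ)+2) * ((j+1).factorial : ℚ)^2 * harmonic' (j+1) 2 := by
  induction j with
  | zero =>
    rw [show 2*0 = 0 from rfl, coeff0_Gpow]
    norm_num [Nat.factorial, harmonic', Finset.sum_range_one]
  | succ j ih =>
    have h := master (2*j+3) (2*j)
    push_cast at h
    rw [show 2*j+3+3 = 2*j+2+4 from by ring, show 2*j+3+1 = 2*j+4 from by ring] at h
    have D := Dlem (j+1)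
    rw [show 2*(j+1) = 2*j+2 from by ring] at D ⊢
    rw [show 2*j+2+2 = 2*j+4 from by ring] at D
    have hf2 : ((j+1+1).factorial : ℚ) = ((j:ℚ)+2) * ((j+1).factorial : ℚ) := by
      rw [Nat.factorial_succ]; push_cast; ring
    have hf1 : ((2*j+2+4).factorial : ℚ)
        = (2*(j:ℚ)+6) * (2*(j:ℚ)+5) * ((2*j+4).factorial : ℚ) := by
      rw [show 2*j+2+4 = (2*j+5)+1 from by ring, Nat.factorial_succ,
        show 2*j+5 = (2*j+4)+1 from by ring, Nat.factorial_succ]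
      push_cast; ring
    have hH : ((j:ℚ)+2)^2 * harmonic' (j+1+1) 2 = ((j:ℚ)+2)^2 * harmonic' (j+1) 2 + 1 := by
      rw [harmonic', Finset.sum_range_succ, ← harmonic']
      have hne : ((j:ℚ)+1+1) ≠ 0 := by positivity
      push_cast
      field_simp
      ring
    rw [hf2] at D
    rw [hf1, hf2]
    have hA : ((2*(j:ℚ)+4) * (2*(j:ℚ)+5)) ≠ 0 := by positivity
    apply mul_left_cancel₀ hA
    push_cast
    linear_combination ((2*(j:ℚ)+6) * (2*(j:ℚ)+5) * ((2*j+4).factorial : ℚ)) * h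
      + (6*(2*(j:ℚ)+6)*(2*(j:ℚ)+5)) * D
      + (-(2*(j:ℚ)+4)^2*(2*(j:ℚ)+6)*(2*(j:ℚ)+5)) * ih
      + (24*((j:ℚ)+3)*((j:ℚ)+2)*(2*(j:ℚ)+5)*(-1:ℚ)^j*2^(2*j+2)*((j+1).factorial : ℚ)^2) * hH
/-- For `m ≥ 2`,
`B^{(2m+1)}_{2m-4}(m) = (-1)^m · 4! · (2m-4)!/(2m)! · ((m-1)!)² · H_{m-1}^{(2)}`. -/
theorem genBernoulli_odd_order_sub_four (m : ℕ) (hm : 2 ≤ m) :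
    genBernoulli (2 * m + 1) (m : ℚ) (2 * m - 4) =
      (-1) ^ m * (Nat.factorial 4 : ℚ) *
        (((2 * m - 4).factorial : ℚ) / ((2 * m).factorial : ℚ)) *
        (((m - 1).factorial : ℚ)) ^ 2 * harmonic' (m - 1) 2 := by
  obtain ⟨j, rfl⟩ : ∃ j, m = j + 2 := ⟨m - 2, by omega⟩
  rw [genBernoulli, hPmk, hmkE]
  rw [show 2*(j+2)+1 = 2*j+5 from by ring, show 2*(j+2)-4 = 2*j from by omega,
    show (j+2)-1 = j+1 from by omega, show 2*(j+2) = 2*j+4 from by ring,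
    show ((j+2:ℕ):ℚ) = (j:ℚ)+2 from by push_cast; ring,
    show ((Nat.factorial 4 : ℕ):ℚ) = 24 from by norm_num [Nat.factorial]]
  have hk := key j
  have hc := hch5 j
  have hC := Clem j
  have hF4 : ((2*j+4).factorial : ℚ) ≠ 0 := factq_ne _
  have hne1 : (2:ℚ)^(2*j) ≠ 0 := by positivity
  have hne2 : (2*(j:ℚ)+4) ≠ 0 := by positivity
  field_simp
  apply mul_left_cancel₀ (mul_ne_zero hne1 hne2)
  linear_combination ((2*(j:ℚ)+4) * ((2*j+4).factorial:ℚ)) * hk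
    + (((2*j+4).factorial:ℚ)) * hc
    + (4:ℚ) * hC
end
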